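/- arXiv:2504.14732 — 2 statements merged into one kernel-verified Lean document; each statement's English description precedes it below -/
import Mathlib

section
/- Let K ≥ 2, m ≥ 1, B > 0, let x_0,…,x_{K−1} ∈ ℝ^m with ‖x_j‖₂ ≤ 1 for all j, and define f_i(w) = exp(⟨w, x_i⟩)/Σ_{j=0}^{K−1} exp(⟨w, x_j⟩). Then f_i is Lipschitz on the ball of radius B with constant 2·exp(4B)/K: for all w, w' with ‖w‖₂ ≤ B and ‖w'‖₂ ≤ B and every i, |f_i(w) − f_i(w')| ≤ (2·exp(4B)/K)·‖w − w'‖₂. -/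
set_option maxHeartbeats 800000


open scoped RealInnerProductSpace BigOperators

private lemma exp_lip_aux {B s t : ℝ} (hs : |s| ≤ B) (ht : |t| ≤ B) (hst : s ≤ t) :
    |Real.exp s - Real.exp t| ≤ Real.exp B * |s - t| := by
  have h1 : Real.exp t - Real.exp s ≤ Real.exp B * (t - s) := by
    have hu : 0 ≤ t - s := by linarith
    have h2 : 1 - (t - s) ≤ Real.exp (-(t - s)) := by
      have := Real.add_one_le_exp (-(t - s)); linarith
    have h3 : Real.exp t - Real.exp s = Real.exp t * (1 - Real.exp (-(t - s))) := by
      rw [mul_sub, mul_one, ← Real.exp_add]; ring_nf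
    have h4 : Real.exp t * (1 - Real.exp (-(t - s))) ≤ Real.exp t * (t - s) := by
      have := Real.exp_pos t
      nlinarith
    have h5 : Real.exp t ≤ Real.exp B := Real.exp_le_exp.mpr ((abs_le.mp ht).2)
    nlinarith [Real.exp_pos t]
  have he : Real.exp s ≤ Real.exp t := Real.exp_le_exp.mpr hst
  rw [abs_of_nonpos (by linarith), abs_of_nonpos (by linarith)]
  linarith

private lemma exp_lip {B s t : ℝ} (hs : |s| ≤ B) (ht : |t| ≤ B) :
    |Real.exp s - Real.exp t| ≤ Real.exp B * |s - t| := by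
  rcases le_total s t with h | h
  · exact exp_lip_aux hs ht h
  · rw [abs_sub_comm, abs_sub_comm s t]; exact exp_lip_aux ht hs h

/-- Each softmax probability `f_i(w) = exp⟨w,x_i⟩ / ∑_j exp⟨w,x_j⟩` is
Lipschitz on the Euclidean ball of radius `B` with constant `2·exp(4B)/K`, provided
`‖x_j‖ ≤ 1` for all `j`. -/
theorem softmax_prob_lipschitz (K m : ℕ) (hK : 2 ≤ K) (hm : 1 ≤ m)
    (B : ℝ) (hB : 0 < B)
    (x : Fin K → EuclideanSpace ℝ (Fin m)) (hx : ∀ j, ‖x j‖ ≤ 1)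
    (w w' : EuclideanSpace ℝ (Fin m)) (hw : ‖w‖ ≤ B) (hw' : ‖w'‖ ≤ B)
    (i : Fin K) :
    |Real.exp ⟪w, x i⟫ / (∑ j, Real.exp ⟪w, x j⟫) -
      Real.exp ⟪w', x i⟫ / (∑ j, Real.exp ⟪w', x j⟫)| ≤
    2 * Real.exp (4 * B) / K * ‖w - w'‖ := by
  set a := Real.exp ⟪w, x i⟫ with ha_def
  set a' := Real.exp ⟪w', x i⟫ with ha'_def
  set S := ∑ j, Real.exp ⟪w, x j⟫ with hS_def
  set S' := ∑ j, Real.exp ⟪w', x j⟫ with hS'_def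
  set d := ‖w - w'‖ with hd_def
  have hKpos : (0:ℝ) < K := by positivity
  have hdnn : 0 ≤ d := norm_nonneg _
  -- inner products are bounded by B
  have hbw : ∀ (v : EuclideanSpace ℝ (Fin m)), ‖v‖ ≤ B → ∀ j, |⟪v, x j⟫| ≤ B := by
    intro v hv j
    calc |⟪v, x j⟫| ≤ ‖v‖ * ‖x j‖ := abs_real_inner_le_norm _ _
      _ ≤ B * 1 := mul_le_mul hv (hx j) (norm_nonneg _) hB.le
      _ = B := mul_one B
  -- difference of inner products bounded by d
  have hdiff : ∀ j, |⟪w, x j⟫ - ⟪w', x j⟫| ≤ d := by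
    intro j
    rw [← inner_sub_left]
    calc |⟪w - w', x j⟫| ≤ ‖w - w'‖ * ‖x j‖ := abs_real_inner_le_norm _ _
      _ ≤ d * 1 := mul_le_mul le_rfl (hx j) (norm_nonneg _) hdnn
      _ = d := mul_one d
  have hexpub : ∀ j, Real.exp ⟪w', x j⟫ ≤ Real.exp B := fun j =>
    Real.exp_le_exp.mpr ((abs_le.mp (hbw w' hw' j)).2)
  have hexplbw : ∀ j, Real.exp (-B) ≤ Real.exp ⟪w, x j⟫ := fun j =>
    Real.exp_le_exp.mpr ((abs_le.mp (hbw w hw j)).1)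
  have hexplbw' : ∀ j, Real.exp (-B) ≤ Real.exp ⟪w', x j⟫ := fun j =>
    Real.exp_le_exp.mpr ((abs_le.mp (hbw w' hw' j)).1)
  -- lower bounds on the sums
  have hSlb : (K:ℝ) * Real.exp (-B) ≤ S := by
    calc (K:ℝ) * Real.exp (-B) = ∑ _j : Fin K, Real.exp (-B) := by
          rw [Finset.sum_const, Finset.card_univ, Fintype.card_fin, nsmul_eq_mul]
      _ ≤ S := Finset.sum_le_sum fun j _ => hexplbw j
  have hS'lb : (K:ℝ) * Real.exp (-B) ≤ S' := by
    calc (K:ℝ) * Real.exp (-B) = ∑ _j : Fin K, Real.exp (-B) := by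
          rw [Finset.sum_const, Finset.card_univ, Fintype.card_fin, nsmul_eq_mul]
      _ ≤ S' := Finset.sum_le_sum fun j _ => hexplbw' j
  have hS'ub : S' ≤ (K:ℝ) * Real.exp B := by
    calc S' ≤ ∑ _j : Fin K, Real.exp B := Finset.sum_le_sum fun j _ => hexpub j
      _ = (K:ℝ) * Real.exp B := by
          rw [Finset.sum_const, Finset.card_univ, Fintype.card_fin, nsmul_eq_mul]
  have hSpos : 0 < S := lt_of_lt_of_le (by positivity) hSlb
  have hS'pos : 0 < S' := lt_of_lt_of_le (by positivity) hS'lb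
  -- numerator bounds
  have haa' : |a - a'| ≤ Real.exp B * d := by
    calc |a - a'| ≤ Real.exp B * |⟪w, x i⟫ - ⟪w', x i⟫| :=
          exp_lip (hbw w hw i) (hbw w' hw' i)
      _ ≤ Real.exp B * d := by
          exact mul_le_mul_of_nonneg_left (hdiff i) (Real.exp_pos B).le
  have hSS' : |S' - S| ≤ (K:ℝ) * Real.exp B * d := by
    have : S' - S = ∑ j, (Real.exp ⟪w', x j⟫ - Real.exp ⟪w, x j⟫) := by
      rw [Finset.sum_sub_distrib]
    rw [this]
    calc |∑ j, (Real.exp ⟪w', x j⟫ - Real.exp ⟪w, x j⟫)|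
        ≤ ∑ j, |Real.exp ⟪w', x j⟫ - Real.exp ⟪w, x j⟫| :=
          Finset.abs_sum_le_sum_abs _ _
      _ ≤ ∑ _j : Fin K, Real.exp B * d := by
          refine Finset.sum_le_sum fun j _ => ?_
          calc |Real.exp ⟪w', x j⟫ - Real.exp ⟪w, x j⟫|
              ≤ Real.exp B * |⟪w', x j⟫ - ⟪w, x j⟫| :=
                exp_lip (hbw w' hw' j) (hbw w hw j)
            _ ≤ Real.exp B * d := by
                rw [abs_sub_comm]
                exact mul_le_mul_of_nonneg_left (hdiff j) (Real.exp_pos B).le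
      _ = (K:ℝ) * Real.exp B * d := by
          rw [Finset.sum_const, Finset.card_univ, Fintype.card_fin, nsmul_eq_mul]; ring
  have ha'ub : a' ≤ Real.exp B := hexpub i
  have ha'pos : 0 < a' := Real.exp_pos _
  -- key identity
  have hkey : a / S - a' / S' = ((a - a') * S' + a' * (S' - S)) / (S * S') := by
    field_simp
    ring
  rw [hkey]
  have hnum : |(a - a') * S' + a' * (S' - S)| ≤ 2 * (K:ℝ) * Real.exp B * Real.exp B * d := by
    calc |(a - a') * S' + a' * (S' - S)|
        ≤ |(a - a') * S'| + |a' * (S' - S)| := abs_add_le _ _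
      _ = |a - a'| * S' + a' * |S' - S| := by
          rw [abs_mul, abs_mul, abs_of_pos hS'pos, abs_of_pos ha'pos]
      _ ≤ (Real.exp B * d) * ((K:ℝ) * Real.exp B) + Real.exp B * ((K:ℝ) * Real.exp B * d) := by
          have h1 : |a - a'| * S' ≤ (Real.exp B * d) * ((K:ℝ) * Real.exp B) :=
            mul_le_mul haa' hS'ub hS'pos.le (by positivity)
          have h2 : a' * |S' - S| ≤ Real.exp B * ((K:ℝ) * Real.exp B * d) :=
            mul_le_mul ha'ub hSS' (abs_nonneg _) (Real.exp_pos B).le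
          linarith
      _ = 2 * (K:ℝ) * Real.exp B * Real.exp B * d := by ring
  have hden : ((K:ℝ) * Real.exp (-B)) * ((K:ℝ) * Real.exp (-B)) ≤ S * S' := by
    have := mul_le_mul hSlb hS'lb (by positivity) hSpos.le
    linarith
  have hdenpos : 0 < ((K:ℝ) * Real.exp (-B)) * ((K:ℝ) * Real.exp (-B)) := by positivity
  calc |((a - a') * S' + a' * (S' - S)) / (S * S')|
      = |(a - a') * S' + a' * (S' - S)| / (S * S') := by
        rw [abs_div, abs_of_pos (by positivity : (0:ℝ) < S * S')]
    _ ≤ (2 * (K:ℝ) * Real.exp B * Real.exp B * d) /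
          (((K:ℝ) * Real.exp (-B)) * ((K:ℝ) * Real.exp (-B))) := by
        gcongr
    _ = 2 * Real.exp (4 * B) / K * d := by
        rw [Real.exp_neg]
        have h4 : Real.exp (4 * B) = Real.exp B ^ 4 := by
          rw [← Real.exp_nat_mul]; norm_num
        rw [h4]
        have hE : Real.exp B ≠ 0 := (Real.exp_pos B).ne'
        field_simp
end

section
/- Let K ≥ 2, m ≥ 1, B > 0, let x_0,…,x_{K−1} ∈ ℝ^m with ‖x_j‖₂ ≤ 1 for all j, and define the expected reward R(w) = Σ_{i=0}^{K−1} i · exp(⟨w, x_i⟩)/Σ_{j=0}^{K−1} exp(⟨w, x_j⟩). Then for all w, w' ∈ ℝ^m with ‖w‖₂ ≤ B and ‖w'‖₂ ≤ B: |R(w) − R(w')| ≤ 2K·exp(4B)·‖w − w'‖₂. -/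
set_option maxHeartbeats 1000000


open scoped RealInnerProductSpace BigOperators

lemma exp_lip_aux_s10 {a b c : ℝ} (ha : a ≤ c) (hb : b ≤ c) :
    |Real.exp a - Real.exp b| ≤ Real.exp c * |a - b| := by
  wlog h : b ≤ a generalizing a b
  · rw [abs_sub_comm, abs_sub_comm a b]; exact this hb ha (le_of_not_ge h)
  rw [abs_of_nonneg (sub_nonneg.2 (Real.exp_le_exp.2 h)), abs_of_nonneg (sub_nonneg.2 h)]
  have h1 : Real.exp a * (1 + (b - a)) ≤ Real.exp b := by
    have h2 := Real.add_one_le_exp (b - a)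
    calc Real.exp a * (1 + (b - a)) = Real.exp a * ((b - a) + 1) := by ring
    _ ≤ Real.exp a * Real.exp (b - a) := by nlinarith [Real.exp_pos a]
    _ = Real.exp b := by rw [← Real.exp_add]; ring_nf
  nlinarith [Real.exp_le_exp.2 ha, Real.exp_pos a]

/-- The expected reward `R(w) = ∑ i, i · exp⟨w,x_i⟩ / ∑_j exp⟨w,x_j⟩` of
the K-ary softmax feedback model is `2K·exp(4B)`-Lipschitz on the Euclidean ball of radius
`B`, provided `‖x_j‖ ≤ 1` for all `j`. -/
theorem expected_reward_lipschitz (K m : ℕ) (hK : 2 ≤ K) (hm : 1 ≤ m)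
    (B : ℝ) (hB : 0 < B)
    (x : Fin K → EuclideanSpace ℝ (Fin m)) (hx : ∀ j, ‖x j‖ ≤ 1)
    (w w' : EuclideanSpace ℝ (Fin m)) (hw : ‖w‖ ≤ B) (hw' : ‖w'‖ ≤ B) :
    |(∑ i : Fin K, (i.val : ℝ) * (Real.exp ⟪w, x i⟫ / ∑ j, Real.exp ⟪w, x j⟫)) -
      ∑ i : Fin K, (i.val : ℝ) * (Real.exp ⟪w', x i⟫ / ∑ j, Real.exp ⟪w', x j⟫)| ≤
    2 * K * Real.exp (4 * B) * ‖w - w'‖ := by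
  set e : Fin K → ℝ := fun i => Real.exp ⟪w, x i⟫ with he
  set e' : Fin K → ℝ := fun i => Real.exp ⟪w', x i⟫ with he'
  set S : ℝ := ∑ j, e j with hS
  set S' : ℝ := ∑ j, e' j with hS'
  set d : ℝ := ‖w - w'‖ with hd
  have hd0 : 0 ≤ d := norm_nonneg _
  have hKpos : (0:ℝ) < K := by positivity
  -- inner product bounds
  have hin : ∀ i, |⟪w, x i⟫| ≤ B := by
    intro i
    refine (abs_real_inner_le_norm w (x i)).trans ?_
    calc ‖w‖ * ‖x i‖ ≤ B * 1 := mul_le_mul hw (hx i) (norm_nonneg _) hB.le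
    _ = B := mul_one B
  have hin' : ∀ i, |⟪w', x i⟫| ≤ B := by
    intro i
    refine (abs_real_inner_le_norm w' (x i)).trans ?_
    calc ‖w'‖ * ‖x i‖ ≤ B * 1 := mul_le_mul hw' (hx i) (norm_nonneg _) hB.le
    _ = B := mul_one B
  have hin_diff : ∀ i, |⟪w, x i⟫ - ⟪w', x i⟫| ≤ d := by
    intro i
    rw [← inner_sub_left]
    refine (abs_real_inner_le_norm (w - w') (x i)).trans ?_
    calc ‖w - w'‖ * ‖x i‖ ≤ d * 1 := mul_le_mul le_rfl (hx i) (norm_nonneg _) hd0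
    _ = d := mul_one d
  have he_lb : ∀ i, Real.exp (-B) ≤ e i := fun i =>
    Real.exp_le_exp.2 (neg_le_of_abs_le (hin i))
  have hS_lb : (K:ℝ) * Real.exp (-B) ≤ S := by
    calc (K:ℝ) * Real.exp (-B) = ∑ _j : Fin K, Real.exp (-B) := by
          rw [Finset.sum_const, Finset.card_univ, Fintype.card_fin, nsmul_eq_mul]
    _ ≤ S := Finset.sum_le_sum fun i _ => he_lb i
  have hS_pos : 0 < S := lt_of_lt_of_le (by positivity) hS_lb
  have hS'_pos : 0 < S' :=
    Finset.sum_pos (fun i _ => Real.exp_pos _) (by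
      have : Nonempty (Fin K) := ⟨⟨0, by omega⟩⟩
      exact Finset.univ_nonempty)
  -- differences
  have he_diff : ∀ i, |e i - e' i| ≤ Real.exp B * d := by
    intro i
    refine (exp_lip_aux_s10 (le_of_abs_le (hin i)) (le_of_abs_le (hin' i))).trans ?_
    exact mul_le_mul_of_nonneg_left (hin_diff i) (Real.exp_pos B).le
  have hS_diff : |S' - S| ≤ (K:ℝ) * (Real.exp B * d) := by
    have h0 : S' - S = ∑ j, (e' j - e j) := by rw [Finset.sum_sub_distrib]
    rw [h0]
    refine (Finset.abs_sum_le_sum_abs _ _).trans ?_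
    calc ∑ j, |e' j - e j| ≤ ∑ _j : Fin K, Real.exp B * d :=
          Finset.sum_le_sum fun j _ => by rw [abs_sub_comm]; exact he_diff j
    _ = (K:ℝ) * (Real.exp B * d) := by
          rw [Finset.sum_const, Finset.card_univ, Fintype.card_fin, nsmul_eq_mul]
  -- exp(2B) identity
  have hexp2 : Real.exp (2 * B) = Real.exp B * Real.exp B := by
    rw [two_mul, Real.exp_add]
  -- per-term bound
  have key : ∀ i : Fin K, |e i / S - e' i / S'| ≤
      |e i - e' i| / S + (e' i / S') * (|S' - S| / S) := by
    intro i
    have hid : e i / S - e' i / S' = (e i - e' i) / S + (e' i / S') * ((S' - S) / S) := by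
      field_simp
      ring
    rw [hid]
    refine (abs_add_le _ _).trans ?_
    rw [abs_div, abs_of_pos hS_pos, abs_mul, abs_div, abs_div,
      abs_of_pos hS_pos, abs_of_pos hS'_pos, abs_of_pos (Real.exp_pos _)]
  -- reduce to sum of abs
  have step1 : |(∑ i : Fin K, (i.val : ℝ) * (e i / S)) -
      ∑ i : Fin K, (i.val : ℝ) * (e' i / S')| ≤
      ∑ i : Fin K, (i.val : ℝ) * (|e i - e' i| / S + (e' i / S') * (|S' - S| / S)) := by
    rw [← Finset.sum_sub_distrib]
    refine (Finset.abs_sum_le_sum_abs _ _).trans (Finset.sum_le_sum fun i _ => ?_)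
    rw [← mul_sub, abs_mul, abs_of_nonneg (by positivity : (0:ℝ) ≤ (i.val:ℝ))]
    exact mul_le_mul_of_nonneg_left (key i) (by positivity)
  -- split sum
  have hsplit : ∑ i : Fin K, (i.val : ℝ) * (|e i - e' i| / S + (e' i / S') * (|S' - S| / S)) =
      (∑ i : Fin K, (i.val : ℝ) * |e i - e' i|) / S +
      (|S' - S| / S) * ∑ i : Fin K, (i.val : ℝ) * (e' i / S') := by
    rw [Finset.sum_div, Finset.mul_sum, ← Finset.sum_add_distrib]
    congr 1; ext i; ring
  -- bound first piece
  have hP1 : (∑ i : Fin K, (i.val : ℝ) * |e i - e' i|) / S ≤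
      (K:ℝ) * Real.exp (2 * B) * d := by
    have hnum : ∑ i : Fin K, (i.val : ℝ) * |e i - e' i| ≤
        (K:ℝ) * ((K:ℝ) * (Real.exp B * d)) := by
      calc ∑ i : Fin K, (i.val : ℝ) * |e i - e' i|
          ≤ ∑ _i : Fin K, (K:ℝ) * (Real.exp B * d) := by
            refine Finset.sum_le_sum fun i _ => ?_
            refine mul_le_mul ?_ (he_diff i) (abs_nonneg _) hKpos.le
            exact_mod_cast (i.isLt).le
      _ = (K:ℝ) * ((K:ℝ) * (Real.exp B * d)) := by
            rw [Finset.sum_const, Finset.card_univ, Fintype.card_fin, nsmul_eq_mul]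
    calc (∑ i : Fin K, (i.val : ℝ) * |e i - e' i|) / S
        ≤ ((K:ℝ) * ((K:ℝ) * (Real.exp B * d))) / ((K:ℝ) * Real.exp (-B)) :=
          div_le_div₀ (by positivity) hnum (by positivity) hS_lb
    _ = (K:ℝ) * Real.exp (2 * B) * d := by
          rw [hexp2, Real.exp_neg]
          field_simp
  -- bound the probability-weighted sum
  have hprob : ∑ i : Fin K, (i.val : ℝ) * (e' i / S') ≤ (K:ℝ) := by
    have h1 : ∑ i : Fin K, e' i / S' = 1 := by
      rw [← Finset.sum_div, div_self hS'_pos.ne']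
    calc ∑ i : Fin K, (i.val : ℝ) * (e' i / S')
        ≤ ∑ i : Fin K, (K:ℝ) * (e' i / S') := by
          refine Finset.sum_le_sum fun i _ => ?_
          refine mul_le_mul ?_ le_rfl (by positivity) hKpos.le
          exact_mod_cast (i.isLt).le
    _ = (K:ℝ) * ∑ i : Fin K, e' i / S' := by rw [Finset.mul_sum]
    _ = (K:ℝ) := by rw [h1, mul_one]
  have hP2 : (|S' - S| / S) * (∑ i : Fin K, (i.val : ℝ) * (e' i / S')) ≤
      (K:ℝ) * Real.exp (2 * B) * d := by
    have hfrac : |S' - S| / S ≤ Real.exp (2 * B) * d := by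
      calc |S' - S| / S ≤ ((K:ℝ) * (Real.exp B * d)) / ((K:ℝ) * Real.exp (-B)) :=
            div_le_div₀ (by positivity) hS_diff (by positivity) hS_lb
      _ = Real.exp (2 * B) * d := by
            rw [hexp2, Real.exp_neg]
            field_simp
    calc (|S' - S| / S) * (∑ i : Fin K, (i.val : ℝ) * (e' i / S'))
        ≤ (Real.exp (2 * B) * d) * (K:ℝ) := by
          refine mul_le_mul hfrac hprob ?_ (by positivity)
          exact Finset.sum_nonneg fun i _ => by positivity
    _ = (K:ℝ) * Real.exp (2 * B) * d := by ring
  -- put together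
  have hfinal : |(∑ i : Fin K, (i.val : ℝ) * (e i / S)) -
      ∑ i : Fin K, (i.val : ℝ) * (e' i / S')| ≤ 2 * (K:ℝ) * Real.exp (2 * B) * d := by
    refine step1.trans ?_
    rw [hsplit]
    nlinarith [hP1, hP2]
  refine hfinal.trans ?_
  have hee : Real.exp (2 * B) ≤ Real.exp (4 * B) := Real.exp_le_exp.2 (by linarith)
  gcongr
end
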